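/- arXiv:1011.6401 — 6 statements merged into one kernel-verified Lean document; each statement's English description precedes it below -/
import Mathlib

section
/- Let H = H(u,y,z) be a smooth function on an open subset U ⊆ ℝ⁴, let g be the corresponding pp-wave metric, and suppose Y is a smooth vector field on U whose covariant components Y_a = g_{ab}Y^b satisfy the homothety equation ∇_{(a}Y_{b)} = ψ g_{ab} for some constant ψ ∈ ℝ. Let k be the covariantly constant null vector field with covariant components k_a = −δ^u_a. Then the symmetric tensor field L_{ab} = k_{(a}Y_{b)} + ψ u g_{ab} is a Killing tensor of g. -/
noncomputable section

/-- Points of (an open subset of) `ℝ⁴`, with coordinates `(u,v,y,z)` indexed by `0,1,2,3`. -/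
abbrev Pt : Type := Fin 4 → ℝ

/-- Partial derivative of a function in the `i`-th coordinate direction. -/
def pd (i : Fin 4) (f : Pt → ℝ) (p : Pt) : ℝ :=
  fderiv ℝ f p (Pi.single i 1)

/-- Kronecker delta `δ^i_a`. -/
def kd (i a : Fin 4) : ℝ := if i = a then 1 else 0

/-- Symmetrized product of Kronecker deltas, `δ_{(a}^i δ_{b)}^j`. -/
def sd (i j a b : Fin 4) : ℝ := (kd i a * kd j b + kd j a * kd i b) / 2

/-- Components of the pp-wave metric `g = -2 du dv - 2H du² + dy² + dz²`. -/
def ppMetric (H : Pt → ℝ) (p : Pt) (a b : Fin 4) : ℝ :=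
  if a = 0 ∧ b = 0 then -2 * H p
  else if (a = 0 ∧ b = 1) ∨ (a = 1 ∧ b = 0) then -1
  else if (a = 2 ∧ b = 2) ∨ (a = 3 ∧ b = 3) then 1
  else 0

/-- Christoffel symbols `Γ^d_{ab}` of the pp-wave metric:
`Γ^v_{uu} = H_{,u}`, `Γ^y_{uu} = Γ^v_{uy} = Γ^v_{yu} = H_{,y}`,
`Γ^z_{uu} = Γ^v_{uz} = Γ^v_{zu} = H_{,z}`, all others zero. -/
def Gamma (H : Pt → ℝ) (p : Pt) (d a b : Fin 4) : ℝ :=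
  if d = 1 ∧ a = 0 ∧ b = 0 then pd 0 H p
  else if (d = 2 ∧ a = 0 ∧ b = 0) ∨ (d = 1 ∧ ((a = 0 ∧ b = 2) ∨ (a = 2 ∧ b = 0))) then pd 2 H p
  else if (d = 3 ∧ a = 0 ∧ b = 0) ∨ (d = 1 ∧ ((a = 0 ∧ b = 3) ∨ (a = 3 ∧ b = 0))) then pd 3 H p
  else 0

/-- Covariant derivative of a covector field: `∇_a X_b = ∂_a X_b - Γ^d_{ab} X_d`. -/
def covD1 (H : Pt → ℝ) (X : Pt → Fin 4 → ℝ) (p : Pt) (a b : Fin 4) : ℝ :=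
  pd a (fun q => X q b) p - ∑ d, Gamma H p d a b * X p d

/-- Covariant derivative of a 2-tensor field:
`∇_c T_{ab} = ∂_c T_{ab} - Γ^d_{ca} T_{db} - Γ^d_{cb} T_{ad}`. -/
def covD2 (H : Pt → ℝ) (T : Pt → Fin 4 → Fin 4 → ℝ) (p : Pt) (c a b : Fin 4) : ℝ :=
  pd c (fun q => T q a b) p - ∑ d, Gamma H p d c a * T p d b
    - ∑ d, Gamma H p d c b * T p a d

/-- A Killing vector of the pp-wave metric on `U`, given by its covariant components:
a smooth covector field with `∇_{(a}X_{b)} = 0` on `U`. -/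
def IsKillingVector (H : Pt → ℝ) (U : Set Pt) (X : Pt → Fin 4 → ℝ) : Prop :=
  (∀ a, ContDiffOn ℝ (⊤ : ℕ∞) (fun p => X p a) U) ∧
  ∀ p ∈ U, ∀ a b, covD1 H X p a b + covD1 H X p b a = 0

/-- A (second order) Killing tensor of the pp-wave metric on `U`: a smooth symmetric
2-tensor field with `∇_{(c}K_{ab)} = 0` on `U`. -/
def IsKillingTensor (H : Pt → ℝ) (U : Set Pt) (K : Pt → Fin 4 → Fin 4 → ℝ) : Prop :=
  (∀ a b, ContDiffOn ℝ (⊤ : ℕ∞) (fun p => K p a b) U) ∧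
  (∀ p a b, K p a b = K p b a) ∧
  ∀ p ∈ U, ∀ a b c,
    covD2 H K p c a b + covD2 H K p a b c + covD2 H K p b c a = 0

/-- A Killing tensor is reducible if (on `U`) it is a constant-coefficient linear combination
of the metric `g_{ab}` and finitely many symmetrized products `X_{(a}Y_{b)}` of Killing
vectors `X`, `Y`. -/
def IsReducible (H : Pt → ℝ) (U : Set Pt) (K : Pt → Fin 4 → Fin 4 → ℝ) : Prop :=
  ∃ (c₀ : ℝ) (n : ℕ) (c : Fin n → ℝ) (X Y : Fin n → Pt → Fin 4 → ℝ),
    (∀ i, IsKillingVector H U (X i)) ∧ (∀ i, IsKillingVector H U (Y i)) ∧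
    ∀ p ∈ U, ∀ a b, K p a b =
      c₀ * ppMetric H p a b + ∑ i, c i * ((X i p a * Y i p b + X i p b * Y i p a) / 2)



/-! ### Auxiliary lemmas -/

def eC (a b : Fin 4) : ℝ := if a = 0 ∧ b = 0 then 1 else 0
def fC (a b : Fin 4) : ℝ :=
  if (a = 0 ∧ b = 1) ∨ (a = 1 ∧ b = 0) then -1
  else if (a = 2 ∧ b = 2) ∨ (a = 3 ∧ b = 3) then 1 else 0

lemma ppMetric_eq (H : Pt → ℝ) (p : Pt) (a b : Fin 4) :
    ppMetric H p a b = -2 * H p * eC a b + fC a b := by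
  unfold ppMetric eC fC
  split_ifs <;> simp_all <;> ring

lemma ppMetric_symm (H : Pt → ℝ) (p : Pt) (a b : Fin 4) :
    ppMetric H p a b = ppMetric H p b a := by
  fin_cases a <;> fin_cases b <;> simp [ppMetric]

lemma kd_zero_right (i : Fin 4) : kd i 0 = kd 0 i := by simp [kd, eq_comm]

lemma kd00 : kd 0 0 = 1 := rfl
lemma kd01 : kd 0 1 = 0 := rfl
lemma kd02 : kd 0 2 = 0 := rfl
lemma kd03 : kd 0 3 = 0 := rfl

lemma Gamma_zero (H : Pt → ℝ) (p : Pt) (a b : Fin 4) : Gamma H p 0 a b = 0 := by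
  simp [Gamma]

lemma pd_expand (i : Fin 4) (p : Pt) (c1 c2 c3 c4 : ℝ) (f1 f2 h : Pt → ℝ)
    (hf1 : DifferentiableAt ℝ f1 p) (hf2 : DifferentiableAt ℝ f2 p)
    (hh : DifferentiableAt ℝ h p) :
    pd i (fun q => c1 * f1 q + c2 * f2 q + q 0 * (c3 * h q + c4)) p
      = c1 * pd i f1 p + c2 * pd i f2 p + kd i 0 * (c3 * h p + c4)
        + p 0 * (c3 * pd i h p) := by
  have h0 : HasFDerivAt (fun q : Pt => q 0)
      (ContinuousLinearMap.proj (R := ℝ) (φ := fun _ : Fin 4 => ℝ) 0) p :=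
    hasFDerivAt_apply (𝕜 := ℝ) (0 : Fin 4) p
  have A := ((hf1.hasFDerivAt.const_mul c1).add (hf2.hasFDerivAt.const_mul c2))
  have B := h0.mul ((hh.hasFDerivAt.const_mul c3).add_const c4)
  have T : HasFDerivAt (fun q : Pt => c1 * f1 q + c2 * f2 q + q 0 * (c3 * h q + c4)) _ p := A.add B
  rw [pd, T.fderiv]
  simp [ContinuousLinearMap.add_apply, ContinuousLinearMap.smul_apply,
    ContinuousLinearMap.proj_apply, Pi.single_apply, kd, pd, eq_comm]
  rcases eq_or_ne i 0 with h | h <;> simp [h] <;> ring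

/-- If `Y` is a smooth vector field (given by its covariant components)
satisfying the homothety equation `∇_{(a}Y_{b)} = ψ g_{ab}` with constant `ψ` on an open
set `U`, and `k_a = -δ^u_a` is the covariantly constant null vector, then
`L_{ab} = k_{(a}Y_{b)} + \u03c8 u g_{ab}` is a Killing tensor of the pp-wave metric. -/
theorem stmt0 (U : Set Pt) (hU : IsOpen U) (H : Pt → ℝ)
    (hH : ContDiffOn ℝ (⊤ : ℕ∞) H U)
    (hHv : ∀ (p : Pt) (w : ℝ), H (Function.update p 1 w) = H p)
    (Y : Pt → Fin 4 → ℝ) (hY : ∀ a, ContDiffOn ℝ (⊤ : ℕ∞) (fun p => Y p a) U)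
    (ψ : ℝ)
    (hhom : ∀ p ∈ U, ∀ a b,
      covD1 H Y p a b + covD1 H Y p b a = 2 * (ψ * ppMetric H p a b)) :
    IsKillingTensor H U (fun p a b =>
      ((-kd 0 a) * Y p b + (-kd 0 b) * Y p a) / 2 + ψ * p 0 * ppMetric H p a b) := by
  constructor
  · -- smoothness
    intro a b
    have e : (fun p : Pt => ((-kd 0 a) * Y p b + (-kd 0 b) * Y p a) / 2
        + ψ * p 0 * ppMetric H p a b)
        = fun p : Pt => ((-kd 0 a) * Y p b + (-kd 0 b) * Y p a) / 2
          + ψ * p 0 * (-2 * H p * eC a b + fC a b) := by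
      funext p; rw [ppMetric_eq]
    rw [e]
    have hcoord : ContDiffOn ℝ (⊤ : ℕ∞) (fun q : Pt => q 0) U :=
      (ContinuousLinearMap.proj (R := ℝ) (φ := fun _ : Fin 4 => ℝ) 0).contDiff.contDiffOn
    exact (((contDiffOn_const.mul (hY b)).add (contDiffOn_const.mul (hY a))).div_const 2).add
      ((contDiffOn_const.mul hcoord).mul
        (((contDiffOn_const.mul hH).mul contDiffOn_const).add contDiffOn_const))
  constructor
  · -- symmetry
    intro p a b
    beta_reduce
    rw [ppMetric_symm]
    ring
  · -- Killing equation
    intro p hp a b c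
    have hHd : DifferentiableAt ℝ H p :=
      (hH.contDiffAt (hU.mem_nhds hp)).differentiableAt (by simp)
    have hYd : ∀ a, DifferentiableAt ℝ (fun q => Y q a) p := fun a =>
      ((hY a).contDiffAt (hU.mem_nhds hp)).differentiableAt (by simp)
    -- H does not depend on v
    have hpd1 : pd 1 H p = 0 := by
      have hline : HasDerivAt (fun t : ℝ => Function.update p 1 t) (Pi.single 1 1 : Pt) (p 1) := by
        have e : (fun t : ℝ => Function.update p 1 t)
            = fun t => Function.update p 1 0 + t • (Pi.single 1 1 : Pt) := by
          funext t; funext j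
          by_cases hj : j = 1 <;> simp [Function.update_apply, hj, Pi.single_apply]
        rw [e]
        simpa using ((hasDerivAt_id (p 1)).smul_const (Pi.single 1 1 : Pt)).const_add
          (Function.update p 1 0)
      have hcomp : HasDerivAt (H ∘ fun t : ℝ => Function.update p 1 t)
          (fderiv ℝ H p (Pi.single 1 1)) (p 1) := by
        refine HasFDerivAt.comp_hasDerivAt (p 1) ?_ hline
        rw [Function.update_eq_self]
        exact hHd.hasFDerivAt
      have hconst : HasDerivAt (H ∘ fun t : ℝ => Function.update p 1 t) 0 (p 1) := by
        have e : (H ∘ fun t : ℝ => Function.update p 1 t) = fun _ => H p := by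
          funext t; simp [Function.comp, hHv]
        rw [e]; exact hasDerivAt_const _ _
      simpa [pd] using hcomp.unique hconst
    -- metric compatibility
    have hg0 : ∀ c a b : Fin 4, -2 * pd c H p * eC a b
        - (∑ d, Gamma H p d c a * ppMetric H p d b)
        - (∑ d, Gamma H p d c b * ppMetric H p a d) = 0 := by
      intro c a b
      fin_cases c <;> fin_cases a <;> fin_cases b <;>
        simp [Fin.sum_univ_four, Gamma, ppMetric, eC, hpd1] <;> ring
    -- key formula for the covariant derivative of L
    have key : ∀ c a b : Fin 4, covD2 H (fun p a b =>
        ((-kd 0 a) * Y p b + (-kd 0 b) * Y p a) / 2 + ψ * p 0 * ppMetric H p a b) p c a b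
        = (-kd 0 a) * covD1 H Y p c b / 2 + (-kd 0 b) * covD1 H Y p c a / 2
          + ψ * kd c 0 * ppMetric H p a b := by
      intro c a b
      have e1 : (fun q => ((-kd 0 a) * Y q b + (-kd 0 b) * Y q a) / 2
            + ψ * q 0 * ppMetric H q a b)
          = fun q => (-kd 0 a / 2) * Y q b + (-kd 0 b / 2) * Y q a
              + q 0 * ((ψ * (-2 * eC a b)) * H q + ψ * fC a b) := by
        funext q; rw [ppMetric_eq]; ring
      simp only [covD2, covD1]
      rw [e1, pd_expand c p _ _ _ _ _ _ _ (hYd b) (hYd a) hHd]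
      have h := hg0 c a b
      simp only [Fin.sum_univ_four, ppMetric_eq, Gamma_zero, kd00, kd01, kd02, kd03] at h ⊢
      linear_combination (ψ * p 0) * h
    rw [key c a b, key a b c, key b c a]
    have h1 := hhom p hp c b
    have h2 := hhom p hp c a
    have h3 := hhom p hp a b
    rw [show ppMetric H p c b = ppMetric H p b c from ppMetric_symm H p c b] at h1
    rw [show ppMetric H p c a = ppMetric H p a c from ppMetric_symm H p c a] at h2
    rw [kd_zero_right a, kd_zero_right b, kd_zero_right c,
      show ppMetric H p c a = ppMetric H p a c from ppMetric_symm H p c a]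
    linear_combination (-(kd 0 a)) / 2 * h1 + (-(kd 0 b)) / 2 * h2 + (-(kd 0 c)) / 2 * h3


end
end

section
/- Consider the vacuum plane wave metric on ℝ⁴ given by the pp-wave metric with 2H = y² − z², i.e. g = −2 du dv − (y² − z²) du² + dy² + dz². Then the symmetric tensor field L_{ab} = [2v − u(y² − z²)] δ^u_a δ^u_b − y δ_{(a}^u δ_{b)}^y − z δ_{(a}^u δ_{b)}^z − 2u δ_{(a}^u δ_{b)}^v + u (δ^y_a δ^y_b + δ^z_a δ^z_b) is a Killing tensor of g, and L is irreducible. -/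
noncomputable section

namespace Stmt10Aux

def prj (i : Fin 4) : Pt →L[ℝ] ℝ := ContinuousLinearMap.proj i

lemma pd_eq {f : Pt → ℝ} {f' : Pt →L[ℝ] ℝ} {p : Pt} (h : HasFDerivAt f f' p) (i : Fin 4) :
    pd i f p = f' (Pi.single i 1) := by rw [pd, h.fderiv]

lemma hasF_coord (j : Fin 4) (p : Pt) : HasFDerivAt (fun q : Pt => q j) (prj j) p :=
  (prj j).hasFDerivAt

lemma contDiff_coord {n : WithTop ℕ∞} (j : Fin 4) : ContDiff ℝ n (fun q : Pt => q j) :=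
  (prj j).contDiff

lemma pd_coord (i j : Fin 4) (p : Pt) : pd i (fun q : Pt => q j) p = if i = j then 1 else 0 := by
  rw [pd_eq (hasF_coord j p)]; simp [prj, Pi.single_apply, eq_comm]

lemma pd_const (i : Fin 4) (c : ℝ) (p : Pt) : pd i (fun _ : Pt => c) p = 0 := by
  rw [pd_eq (hasFDerivAt_const c p)]; simp

lemma pd_add {f g : Pt → ℝ} {p : Pt} (hf : DifferentiableAt ℝ f p) (hg : DifferentiableAt ℝ g p)
    (i : Fin 4) : pd i (fun q => f q + g q) p = pd i f p + pd i g p := by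
  rw [pd, pd, pd, fderiv_fun_add hf hg]; rfl

lemma pd_sub {f g : Pt → ℝ} {p : Pt} (hf : DifferentiableAt ℝ f p) (hg : DifferentiableAt ℝ g p)
    (i : Fin 4) : pd i (fun q => f q - g q) p = pd i f p - pd i g p := by
  rw [pd, pd, pd, fderiv_fun_sub hf hg]; rfl

lemma pd_neg {f : Pt → ℝ} {p : Pt} (i : Fin 4) :
    pd i (fun q => -f q) p = -pd i f p := by
  rw [pd, pd, fderiv_fun_neg]; rfl

lemma pd_mul {f g : Pt → ℝ} {p : Pt} (hf : DifferentiableAt ℝ f p) (hg : DifferentiableAt ℝ g p)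
    (i : Fin 4) : pd i (fun q => f q * g q) p = pd i f p * g p + f p * pd i g p := by
  rw [pd, pd, pd, fderiv_fun_mul hf hg]; simp; ring

lemma pd_sq {f : Pt → ℝ} {p : Pt} (hf : DifferentiableAt ℝ f p)
    (i : Fin 4) : pd i (fun q => f q ^ 2) p = 2 * f p * pd i f p := by
  have h : (fun q => f q ^ 2) = fun q => f q * f q := funext fun q => by ring
  rw [h, pd_mul hf hf]; ring

lemma pd_div_const {f : Pt → ℝ} {p : Pt} (hf : DifferentiableAt ℝ f p) (c : ℝ) (i : Fin 4) :
    pd i (fun q => f q / c) p = pd i f p / c := by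
  simp only [div_eq_mul_inv, pd, fderiv_mul_const hf]
  simp [mul_comm]

lemma pd_L_generic (A B C D E : ℝ) (i : Fin 4) (p : Pt) :
  pd i (fun q : Pt => (2 * q 1 - q 0 * ((q 2)^2 - (q 3)^2)) * A - q 2 * B - q 3 * C
      - 2 * q 0 * D + q 0 * E) p =
  (if i = 0 then -((p 2)^2 - (p 3)^2) * A - 2*D + E
   else if i = 1 then 2*A
   else if i = 2 then -(2*p 0*p 2)*A - B
   else 2*p 0*p 3*A - C) := by
  simp (disch := fun_prop) only [pd_add, pd_sub, pd_mul, pd_sq, pd_coord, pd_const]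
  fin_cases i <;> simp <;> exact Or.inl (by ring)

def Hf : Pt → ℝ := fun p => ((p 2) ^ 2 - (p 3) ^ 2) / 2

def Lf : Pt → Fin 4 → Fin 4 → ℝ := fun p a b =>
  (2 * p 1 - p 0 * ((p 2) ^ 2 - (p 3) ^ 2)) * sd 0 0 a b
    - p 2 * sd 0 2 a b - p 3 * sd 0 3 a b - 2 * p 0 * sd 0 1 a b
    + p 0 * (sd 2 2 a b + sd 3 3 a b)

lemma pd_Hf (i : Fin 4) (p : Pt) :
    pd i Hf p = if i = 2 then p 2 else if i = 3 then -p 3 else 0 := by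
  show pd i (fun q : Pt => ((q 2)^2 - (q 3)^2)/2) p = _
  simp (disch := fun_prop) only [pd_div_const, pd_sub, pd_sq, pd_coord]
  fin_cases i <;> simp <;> ring

end Stmt10Aux

namespace Stmt10Aux

lemma one_le_inf : (1 : WithTop ℕ∞) ≤ ((⊤ : ℕ∞) : WithTop ℕ∞) := by norm_num
lemma inf_add_one : ((⊤ : ℕ∞) : WithTop ℕ∞) + 1 ≤ ((⊤ : ℕ∞) : WithTop ℕ∞) := by norm_num

lemma smq_pd {f : Pt → ℝ} (hf : ContDiff ℝ ((⊤ : ℕ∞) : WithTop ℕ∞) f) (i : Fin 4) :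
    ContDiff ℝ ((⊤ : ℕ∞) : WithTop ℕ∞) (fun p => pd i f p) := by
  have h1 : ContDiff ℝ ((⊤ : ℕ∞) : WithTop ℕ∞) (fderiv ℝ f) := hf.fderiv_right inf_add_one
  exact (ContinuousLinearMap.apply ℝ ℝ (Pi.single i 1)).contDiff.comp h1

lemma pd_comm {f : Pt → ℝ} (hf : ContDiff ℝ ((⊤ : ℕ∞) : WithTop ℕ∞) f) (i j : Fin 4) (p : Pt) :
    pd i (fun q => pd j f q) p = pd j (fun q => pd i f q) p := by
  have hdiff : Differentiable ℝ f := hf.differentiable (by simp : ((⊤ : ℕ∞) : WithTop ℕ∞) ≠ 0)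
  have h' : ∀ y, HasFDerivAt f (fderiv ℝ f y) y := fun y => (hdiff y).hasFDerivAt
  have h1 : ContDiff ℝ ((⊤ : ℕ∞) : WithTop ℕ∞) (fderiv ℝ f) := hf.fderiv_right inf_add_one
  have h2 : DifferentiableAt ℝ (fderiv ℝ f) p := (h1.differentiable (by simp : ((⊤ : ℕ∞) : WithTop ℕ∞) ≠ 0)) p
  have key := second_derivative_symmetric h' h2.hasFDerivAt (Pi.single i 1) (Pi.single j 1)
  have ev : ∀ v w : Pt, fderiv ℝ (fun q => fderiv ℝ f q w) p v
      = fderiv ℝ (fderiv ℝ f) p v w := by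
    intro v w
    rw [fderiv_clm_apply h2 (differentiableAt_const w)]
    simp
  show fderiv ℝ (fun q => fderiv ℝ f q (Pi.single j 1)) p (Pi.single i 1)
      = fderiv ℝ (fun q => fderiv ℝ f q (Pi.single i 1)) p (Pi.single j 1)
  rw [ev, ev, key]

lemma pd_commF {f : Pt → ℝ} (hf : ContDiff ℝ ((⊤ : ℕ∞) : WithTop ℕ∞) f) (i j : Fin 4) :
    pd i (pd j f) = pd j (pd i f) :=
  funext fun p => pd_comm hf i j p

lemma pd_sum {m : ℕ} {f : Fin m → Pt → ℝ} {p : Pt} (hf : ∀ k, Differentiable ℝ (f k)) (i : Fin 4) :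
    pd i (fun q => ∑ k, f k q) p = ∑ k, pd i (f k) p := by
  rw [pd, fderiv_fun_sum (fun k _ => (hf k) p)]
  simp [pd]

lemma pd_zeroF (i : Fin 4) : pd i (fun _ : Pt => (0:ℝ)) = fun _ => 0 :=
  funext fun p => pd_const i 0 p

/-- The key rigidity fact: every Killing covector field `W` of the metric has
`∂_v W_u = 0` everywhere. -/
theorem killing_key (W : Pt → Fin 4 → ℝ) (hW : IsKillingVector Hf Set.univ W) :
    ∀ p, pd 1 (fun q => W q 0) p = 0 := by
  have smW : ∀ a, ContDiff ℝ ((⊤ : ℕ∞) : WithTop ℕ∞) (fun p => W p a) := fun a =>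
    (contDiffOn_univ.mp (hW.1 a)).of_le (by simp)
  have dW0 : Differentiable ℝ (fun p => W p 0) := (smW 0).differentiable (by simp : ((⊤ : ℕ∞) : WithTop ℕ∞) ≠ 0)
  have dW1 : Differentiable ℝ (fun p => W p 1) := (smW 1).differentiable (by simp : ((⊤ : ℕ∞) : WithTop ℕ∞) ≠ 0)
  have dW2 : Differentiable ℝ (fun p => W p 2) := (smW 2).differentiable (by simp : ((⊤ : ℕ∞) : WithTop ℕ∞) ≠ 0)
  have dW3 : Differentiable ℝ (fun p => W p 3) := (smW 3).differentiable (by simp : ((⊤ : ℕ∞) : WithTop ℕ∞) ≠ 0)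
  have smpdW : ∀ (i : Fin 4) (a : Fin 4),
      ContDiff ℝ ((⊤ : ℕ∞) : WithTop ℕ∞) (pd i (fun q => W q a)) := fun i a =>
    smq_pd (smW a) i
  have dpdW : ∀ (i : Fin 4) (a : Fin 4), Differentiable ℝ (pd i (fun q => W q a)) := fun i a =>
    (smpdW i a).differentiable (by simp : ((⊤ : ℕ∞) : WithTop ℕ∞) ≠ 0)
  have dpd00 := dpdW 0 0
  have dpd01 := dpdW 0 1
  have dpd02 := dpdW 0 2
  have dpd20 := dpdW 2 0
  have dpd21 := dpdW 2 1
  have dpd23 := dpdW 2 3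
  have keq : ∀ p (a b : Fin 4), covD1 Hf W p a b + covD1 Hf W p b a = 0 :=
    fun p a b => hW.2 p (Set.mem_univ p) a b
  -- the Killing equations, as equalities of functions
  have E_vv : pd 1 (fun q => W q 1) = fun _ => 0 := by
    funext p; have h := keq p 1 1
    simp [covD1, Fin.sum_univ_four, Gamma, pd_Hf] at h
    linarith
  have E_vy : pd 1 (fun q => W q 2) = fun q => -(pd 2 (fun r => W r 1) q) := by
    funext p; have h := keq p 1 2
    simp [covD1, Fin.sum_univ_four, Gamma, pd_Hf] at h
    linarith
  have E_uv : pd 1 (fun q => W q 0) = fun q => -(pd 0 (fun r => W r 1) q) := by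
    funext p; have h := keq p 0 1
    simp [covD1, Fin.sum_univ_four, Gamma, pd_Hf] at h
    linarith
  have E_uu : pd 0 (fun q => W q 0) = fun q => q 2 * W q 2 - q 3 * W q 3 := by
    funext p; have h := keq p 0 0
    simp [covD1, Fin.sum_univ_four, Gamma, pd_Hf] at h
    linarith
  have E_uy : pd 0 (fun q => W q 2)
      = fun q => 2 * q 2 * W q 1 - pd 2 (fun r => W r 0) q := by
    funext p; have h := keq p 0 2
    simp [covD1, Fin.sum_univ_four, Gamma, pd_Hf] at h
    linarith
  have E_yy : pd 2 (fun q => W q 2) = fun _ => 0 := by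
    funext p; have h := keq p 2 2
    simp [covD1, Fin.sum_univ_four, Gamma, pd_Hf] at h
    linarith
  have E_yz : pd 2 (fun q => W q 3) = fun q => -(pd 3 (fun r => W r 2) q) := by
    funext p; have h := keq p 2 3
    simp [covD1, Fin.sum_univ_four, Gamma, pd_Hf] at h
    linarith
  -- Step S1 : ∂_u ∂_y W_v = 0  (as functions)
  have s1 : pd 0 (pd 2 (fun r => W r 1)) = fun _ => 0 := by
    funext p
    have h1 : pd 1 (pd 0 (fun r => W r 2)) p
        = pd 1 (fun q => 2 * q 2 * W q 1 - pd 2 (fun r => W r 0) q) p := by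
      rw [E_uy]
    rw [pd_commF (smW 2) 1 0] at h1
    rw [pd_sub (by fun_prop) (by fun_prop),
      pd_mul (by fun_prop) (by fun_prop),
      pd_mul (by fun_prop) (by fun_prop),
      pd_const, pd_coord] at h1
    rw [pd_commF (smW 0) 1 2] at h1
    simp only [E_vy, E_vv, E_uv] at h1
    rw [pd_neg, pd_neg, pd_commF (smW 1) 2 0] at h1
    simp at h1
    all_goals linarith [h1]
  -- Step S2 : ∂_y ∂_y W_z = 0
  have s2 : pd 2 (pd 2 (fun r => W r 3)) = fun _ => 0 := by
    funext p
    have h1 : pd 2 (pd 2 (fun r => W r 3)) p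
        = pd 2 (fun q => -(pd 3 (fun r => W r 2) q)) p := by rw [E_yz]
    rw [pd_neg, pd_commF (smW 2) 2 3] at h1
    simp only [E_yy, pd_zeroF] at h1
    simpa using h1
  -- Step S3 : ∂_u ∂_u W_y = 2 y ∂_u W_v - W_y + z ∂_y W_z
  have s3 : pd 0 (pd 0 (fun r => W r 2))
      = fun q => 2 * q 2 * pd 0 (fun r => W r 1) q - W q 2
          + q 3 * pd 2 (fun r => W r 3) q := by
    funext p
    have h1 : pd 0 (pd 0 (fun r => W r 2)) p
        = pd 0 (fun q => 2 * q 2 * W q 1 - pd 2 (fun r => W r 0) q) p := by rw [E_uy]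
    rw [pd_sub (by fun_prop) (by fun_prop),
      pd_mul (by fun_prop) (by fun_prop),
      pd_mul (by fun_prop) (by fun_prop),
      pd_const, pd_coord] at h1
    rw [pd_commF (smW 0) 0 2] at h1
    simp only [E_uu] at h1
    rw [pd_sub (by fun_prop) (by fun_prop),
      pd_mul (by fun_prop) (by fun_prop),
      pd_mul (by fun_prop) (by fun_prop),
      pd_coord, pd_coord] at h1
    simp only [E_yy, Pi.zero_apply] at h1
    simp at h1
    all_goals linarith [h1]
  -- Step S4 : ∂_u W_v = 0
  have s4 : ∀ p, pd 0 (fun q => W q 1) p = 0 := by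
    intro p
    have h1 : pd 2 (pd 0 (pd 0 (fun r => W r 2))) p
        = pd 2 (fun q => 2 * q 2 * pd 0 (fun r => W r 1) q - W q 2
            + q 3 * pd 2 (fun r => W r 3) q) p := by rw [s3]
    have hL : pd 2 (pd 0 (pd 0 (fun r => W r 2))) p = 0 := by
      rw [pd_commF (smq_pd (smW 2) 0) 2 0, pd_commF (smW 2) 2 0]
      simp [E_yy, pd_zeroF]
    have hR : pd 2 (fun q => 2 * q 2 * pd 0 (fun r => W r 1) q - W q 2
        + q 3 * pd 2 (fun r => W r 3) q) p = 2 * pd 0 (fun r => W r 1) p := by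
      rw [pd_add (by fun_prop) (by fun_prop),
        pd_sub (by fun_prop) (by fun_prop),
        pd_mul (by fun_prop) (by fun_prop),
        pd_mul (by fun_prop) (by fun_prop),
        pd_mul (by fun_prop) (by fun_prop),
        pd_const, pd_coord, pd_coord]
      rw [pd_commF (smW 1) 2 0]
      simp only [s1, s2, E_yy, Pi.zero_apply]
      simp
    rw [hL, hR] at h1
    linarith
  intro p
  have := congrFun E_uv p
  rw [this, s4 p, neg_zero]

end Stmt10Aux

namespace Stmt10Aux

set_option maxHeartbeats 2000000 in
theorem ktmain : IsKillingTensor Hf Set.univ Lf := by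
  refine ⟨?_, ?_, ?_⟩
  · intro a b
    apply ContDiff.contDiffOn
    show ContDiff ℝ (⊤ : ℕ∞) (fun p : Pt => (2 * p 1 - p 0 * ((p 2) ^ 2 - (p 3) ^ 2)) * sd 0 0 a b
      - p 2 * sd 0 2 a b - p 3 * sd 0 3 a b - 2 * p 0 * sd 0 1 a b
      + p 0 * (sd 2 2 a b + sd 3 3 a b))
    exact (((((contDiff_const.mul (contDiff_coord 1)).sub
        ((contDiff_coord 0).mul (((contDiff_coord 2).pow 2).sub ((contDiff_coord 3).pow 2)))).mul
        contDiff_const).sub ((contDiff_coord 2).mul contDiff_const)).sub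
        ((contDiff_coord 3).mul contDiff_const)).sub
        ((contDiff_const.mul (contDiff_coord 0)).mul contDiff_const) |>.add
        ((contDiff_coord 0).mul contDiff_const)
  · intro p a b
    simp only [Lf, sd]
    ring
  · intro p _ a b c
    fin_cases a <;> fin_cases b <;> fin_cases c <;>
      (simp only [covD2, Lf, Fin.sum_univ_four, pd_L_generic]; simp [Gamma, pd_Hf, sd, kd]; try ring)

theorem irrmain : ¬ IsReducible Hf Set.univ Lf := by
  rintro ⟨c₀, n, c, X, Y, hX, hY, hrep⟩
  have hXz : ∀ i p, pd 1 (fun q => X i q 0) p = 0 := fun i => killing_key (X i) (hX i)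
  have hYz : ∀ i p, pd 1 (fun q => Y i q 0) p = 0 := fun i => killing_key (Y i) (hY i)
  have dX : ∀ i a, Differentiable ℝ (fun p => X i p a) := fun i a =>
    ((contDiffOn_univ.mp ((hX i).1 a)).of_le (by simp)).differentiable (by simp : ((⊤ : ℕ∞) : WithTop ℕ∞) ≠ 0)
  have dY : ∀ i a, Differentiable ℝ (fun p => Y i p a) := fun i a =>
    ((contDiffOn_univ.mp ((hY i).1 a)).of_le (by simp)).differentiable (by simp : ((⊤ : ℕ∞) : WithTop ℕ∞) ≠ 0)
  have hid : ∀ p : Pt, Lf p 0 0 = c₀ * (p 3 ^ 2 - p 2 ^ 2)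
      + ∑ i, c i * ((X i p 0 * Y i p 0 + X i p 0 * Y i p 0) / 2) := by
    intro p
    have h := hrep p (Set.mem_univ p) 0 0
    have hpp : ppMetric Hf p 0 0 = p 3 ^ 2 - p 2 ^ 2 := by
      simp [ppMetric, Hf]; ring
    rw [hpp] at h
    exact h
  have hfun : (fun p : Pt => Lf p 0 0) = fun p => c₀ * (p 3 ^ 2 - p 2 ^ 2)
      + ∑ i, c i * ((X i p 0 * Y i p 0 + X i p 0 * Y i p 0) / 2) := funext hid
  set p0 : Pt := fun _ => 0 with hp0
  have dS : ∀ k : Fin n, Differentiable ℝ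
      (fun p : Pt => c k * ((X k p 0 * Y k p 0 + X k p 0 * Y k p 0) / 2)) := by
    intro k
    have h1 := dX k 0
    have h2 := dY k 0
    fun_prop
  have hl : pd 1 (fun p => Lf p 0 0) p0 = 2 := by
    simp only [Lf, pd_L_generic]
    simp [sd, kd]
  have hr : pd 1 (fun p : Pt => c₀ * (p 3 ^ 2 - p 2 ^ 2)
      + ∑ i, c i * ((X i p 0 * Y i p 0 + X i p 0 * Y i p 0) / 2)) p0 = 0 := by
    rw [pd_add (by fun_prop) ((Differentiable.fun_sum (fun k _ => dS k)) p0)]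
    have h1 : pd 1 (fun p : Pt => c₀ * (p 3 ^ 2 - p 2 ^ 2)) p0 = 0 := by
      simp (disch := fun_prop) only [pd_mul, pd_sub, pd_sq, pd_coord, pd_const]
      norm_num
    have h2 : pd 1 (fun p : Pt => ∑ i, c i * ((X i p 0 * Y i p 0 + X i p 0 * Y i p 0) / 2)) p0
        = 0 := by
      rw [pd_sum (fun k => dS k) 1]
      apply Finset.sum_eq_zero
      intro k _
      have e1 := dX k 0
      have e2 := dY k 0
      simp (disch := fun_prop) only [pd_mul, pd_div_const, pd_add, pd_const, hXz, hYz]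
      ring
    rw [h1, h2]
    norm_num
  rw [hfun, hr] at hl
  norm_num at hl

end Stmt10Aux


/-- For the vacuum plane wave `2H = y² - z²` on `ℝ⁴`, the tensor field
`L_{ab} = [2v - u(y²-z²)] δ^u_a δ^u_b - y δ_{(a}^u δ_{b)}^y - z δ_{(a}^u δ_{b)}^z
 - 2u δ_{(a}^u δ_{b)}^v + u (δ^y_a δ^y_b + δ^z_a δ^z_b)`
is an irreducible Killing tensor. -/
theorem stmt10 :
    let H : Pt → ℝ := fun p => ((p 2) ^ 2 - (p 3) ^ 2) / 2
    let L : Pt → Fin 4 → Fin 4 → ℝ := fun p a b =>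
      (2 * p 1 - p 0 * ((p 2) ^ 2 - (p 3) ^ 2)) * sd 0 0 a b
        - p 2 * sd 0 2 a b - p 3 * sd 0 3 a b - 2 * p 0 * sd 0 1 a b
        + p 0 * (sd 2 2 a b + sd 3 3 a b)
    IsKillingTensor H Set.univ L ∧ ¬ IsReducible H Set.univ L := by
  intro H L
  exact ⟨Stmt10Aux.ktmain, Stmt10Aux.irrmain⟩

end
end

section
/- Consider the vacuum plane wave metric on ℝ⁴ given by the pp-wave metric with 2H = y² − z². Each of the following six vector fields, given by their covariant components, is a Killing vector of g: (X₁)_a = −δ^u_a; (X₂)_a = −y cos(u) δ^u_a + sin(u) δ^y_a; (X₃)_a = y sin(u) δ^u_a + cos(u) δ^y_a; (X₄)_a = −z sinh(u) δ^u_a + cosh(u) δ^z_a; (X₅)_a = −z cosh(u) δ^u_a + sinh(u) δ^z_a; (X₇)_a = −(y² − z²) δ^u_a − δ^v_a. Moreover the metric tensor satisfies the identity g_{ab} = −2 X₁_{(a} X₇_{b)} + X₂_a X₂_b + X₃_a X₃_b + X₄_a X₄_b − X₅_a X₅_b; in particular g lies in the span of symmetrized products of Killing vectors. -/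
noncomputable section

attribute [fun_prop] Real.contDiff_cos Real.contDiff_sin Real.contDiff_sinh Real.contDiff_cosh

section Aux

noncomputable def prj (j : Fin 4) : Pt →L[ℝ] ℝ := ContinuousLinearMap.proj j

lemma hasFDerivAt_coord (j : Fin 4) (p : Pt) :
    HasFDerivAt (fun q : Pt => q j) (prj j) p :=
  (prj j).hasFDerivAt

lemma pd_hasFDerivAt {f : Pt → ℝ} {L : Pt →L[ℝ] ℝ} {p : Pt} (h : HasFDerivAt f L p) (i : Fin 4) :
    pd i f p = L (Pi.single i 1) := by rw [pd, h.fderiv]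

lemma pd_const (i : Fin 4) (c : ℝ) (p : Pt) : pd i (fun _ : Pt => c) p = 0 := by
  simp [pd]

lemma hasFDerivAt_sq (j : Fin 4) (p : Pt) :
    HasFDerivAt (fun q : Pt => q j ^ 2) ((p j) • prj j + (p j) • prj j) p := by
  rw [show (fun q : Pt => q j ^ 2) = fun q => q j * q j from funext fun q => pow_two _]
  exact ((hasFDerivAt_coord j p).mul (hasFDerivAt_coord j p))

lemma pdH (i : Fin 4) (p : Pt) :
    pd i (fun q : Pt => ((q 2) ^ 2 - (q 3) ^ 2) / 2) p = p 2 * kd 2 i - p 3 * kd 3 i := by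
  have h2 : HasFDerivAt (fun q : Pt => ((q 2) ^ 2 - (q 3) ^ 2) / 2)
      ((2⁻¹ : ℝ) • (p 2 • prj 2 + p 2 • prj 2 - (p 3 • prj 3 + p 3 • prj 3))) p := by
    simpa [div_eq_mul_inv] using
      (((hasFDerivAt_sq 2 p).sub (hasFDerivAt_sq 3 p)).mul_const (2⁻¹ : ℝ))
  rw [pd_hasFDerivAt h2]
  fin_cases i <;>
    simp only [ContinuousLinearMap.add_apply, ContinuousLinearMap.sub_apply,
      ContinuousLinearMap.smul_apply, ContinuousLinearMap.neg_apply, prj,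
      ContinuousLinearMap.proj_apply, smul_eq_mul] <;>
    simp [Pi.single_apply, kd] <;> first | (split_ifs <;> ring) | ring

lemma pdX2 (i b : Fin 4) (p : Pt) :
    pd i (fun q : Pt => -(q 2) * Real.cos (q 0) * kd 0 b + Real.sin (q 0) * kd 2 b) p
      = (p 2 * Real.sin (p 0) * kd 0 i - Real.cos (p 0) * kd 2 i) * kd 0 b
        + Real.cos (p 0) * kd 0 i * kd 2 b := by
  rw [pd_hasFDerivAt (f := fun q : Pt => -(q 2) * Real.cos (q 0) * kd 0 b + Real.sin (q 0) * kd 2 b)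
    (((((hasFDerivAt_coord 2 p).neg).mul
    ((hasFDerivAt_coord 0 p).cos)).mul_const (kd 0 b)).add
    (((hasFDerivAt_coord 0 p).sin).mul_const (kd 2 b)))]
  fin_cases i <;>
    simp only [ContinuousLinearMap.add_apply, ContinuousLinearMap.sub_apply,
      ContinuousLinearMap.smul_apply, ContinuousLinearMap.neg_apply, prj,
      ContinuousLinearMap.proj_apply, smul_eq_mul] <;>
    simp [Pi.single_apply, kd] <;> first | (split_ifs <;> ring) | ring

lemma pdX3 (i b : Fin 4) (p : Pt) :
    pd i (fun q : Pt => (q 2) * Real.sin (q 0) * kd 0 b + Real.cos (q 0) * kd 2 b) p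
      = (p 2 * Real.cos (p 0) * kd 0 i + Real.sin (p 0) * kd 2 i) * kd 0 b
        - Real.sin (p 0) * kd 0 i * kd 2 b := by
  rw [pd_hasFDerivAt (f := fun q : Pt => (q 2) * Real.sin (q 0) * kd 0 b + Real.cos (q 0) * kd 2 b)
    ((((hasFDerivAt_coord 2 p).mul
    ((hasFDerivAt_coord 0 p).sin)).mul_const (kd 0 b)).add
    (((hasFDerivAt_coord 0 p).cos).mul_const (kd 2 b)))]
  fin_cases i <;>
    simp only [ContinuousLinearMap.add_apply, ContinuousLinearMap.sub_apply,
      ContinuousLinearMap.smul_apply, ContinuousLinearMap.neg_apply, prj,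
      ContinuousLinearMap.proj_apply, smul_eq_mul] <;>
    simp [Pi.single_apply, kd] <;> first | (split_ifs <;> ring) | ring

lemma pdX4 (i b : Fin 4) (p : Pt) :
    pd i (fun q : Pt => -(q 3) * Real.sinh (q 0) * kd 0 b + Real.cosh (q 0) * kd 3 b) p
      = (-(p 3) * Real.cosh (p 0) * kd 0 i - Real.sinh (p 0) * kd 3 i) * kd 0 b
        + Real.sinh (p 0) * kd 0 i * kd 3 b := by
  rw [pd_hasFDerivAt (f := fun q : Pt => -(q 3) * Real.sinh (q 0) * kd 0 b + Real.cosh (q 0) * kd 3 b)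
    (((((hasFDerivAt_coord 3 p).neg).mul
    ((hasFDerivAt_coord 0 p).sinh)).mul_const (kd 0 b)).add
    (((hasFDerivAt_coord 0 p).cosh).mul_const (kd 3 b)))]
  fin_cases i <;>
    simp only [ContinuousLinearMap.add_apply, ContinuousLinearMap.sub_apply,
      ContinuousLinearMap.smul_apply, ContinuousLinearMap.neg_apply, prj,
      ContinuousLinearMap.proj_apply, smul_eq_mul] <;>
    simp [Pi.single_apply, kd] <;> first | (split_ifs <;> ring) | ring

lemma pdX5 (i b : Fin 4) (p : Pt) :
    pd i (fun q : Pt => -(q 3) * Real.cosh (q 0) * kd 0 b + Real.sinh (q 0) * kd 3 b) p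
      = (-(p 3) * Real.sinh (p 0) * kd 0 i - Real.cosh (p 0) * kd 3 i) * kd 0 b
        + Real.cosh (p 0) * kd 0 i * kd 3 b := by
  rw [pd_hasFDerivAt (f := fun q : Pt => -(q 3) * Real.cosh (q 0) * kd 0 b + Real.sinh (q 0) * kd 3 b)
    (((((hasFDerivAt_coord 3 p).neg).mul
    ((hasFDerivAt_coord 0 p).cosh)).mul_const (kd 0 b)).add
    (((hasFDerivAt_coord 0 p).sinh).mul_const (kd 3 b)))]
  fin_cases i <;>
    simp only [ContinuousLinearMap.add_apply, ContinuousLinearMap.sub_apply,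
      ContinuousLinearMap.smul_apply, ContinuousLinearMap.neg_apply, prj,
      ContinuousLinearMap.proj_apply, smul_eq_mul] <;>
    simp [Pi.single_apply, kd] <;> first | (split_ifs <;> ring) | ring

lemma pdX7 (i b : Fin 4) (p : Pt) :
    pd i (fun q : Pt => -((q 2) ^ 2 - (q 3) ^ 2) * kd 0 b - kd 1 b) p
      = (-(2 * p 2) * kd 2 i + 2 * p 3 * kd 3 i) * kd 0 b := by
  rw [pd_hasFDerivAt (f := fun q : Pt => -((q 2) ^ 2 - (q 3) ^ 2) * kd 0 b - kd 1 b)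
    (((((hasFDerivAt_sq 2 p).sub (hasFDerivAt_sq 3 p)).neg).mul_const
    (kd 0 b)).sub_const (kd 1 b))]
  fin_cases i <;>
    simp only [ContinuousLinearMap.add_apply, ContinuousLinearMap.sub_apply,
      ContinuousLinearMap.smul_apply, ContinuousLinearMap.neg_apply, prj,
      ContinuousLinearMap.proj_apply, smul_eq_mul] <;>
    simp [Pi.single_apply, kd] <;> first | (split_ifs <;> ring) | ring

end Aux


section KV

lemma kv1 : IsKillingVector (fun p => ((p 2) ^ 2 - (p 3) ^ 2) / 2) Set.univ
    (fun _ i => -kd 0 i) := by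
  refine ⟨fun a => ContDiff.contDiffOn (by fun_prop), ?_⟩
  intro p _ a b
  simp only [covD1, Fin.sum_univ_four, Gamma, pdH, pd_const]
  fin_cases a <;> fin_cases b <;> simp [kd] <;> ring

lemma kv2 : IsKillingVector (fun p => ((p 2) ^ 2 - (p 3) ^ 2) / 2) Set.univ
    (fun p i => -(p 2) * Real.cos (p 0) * kd 0 i + Real.sin (p 0) * kd 2 i) := by
  refine ⟨fun a => ContDiff.contDiffOn (by fun_prop), ?_⟩
  intro p _ a b
  simp only [covD1, Fin.sum_univ_four, Gamma, pdH, pdX2]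
  fin_cases a <;> fin_cases b <;> simp [kd] <;> ring

lemma kv3 : IsKillingVector (fun p => ((p 2) ^ 2 - (p 3) ^ 2) / 2) Set.univ
    (fun p i => (p 2) * Real.sin (p 0) * kd 0 i + Real.cos (p 0) * kd 2 i) := by
  refine ⟨fun a => ContDiff.contDiffOn (by fun_prop), ?_⟩
  intro p _ a b
  simp only [covD1, Fin.sum_univ_four, Gamma, pdH, pdX3]
  fin_cases a <;> fin_cases b <;> simp [kd] <;> ring

lemma kv4 : IsKillingVector (fun p => ((p 2) ^ 2 - (p 3) ^ 2) / 2) Set.univ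
    (fun p i => -(p 3) * Real.sinh (p 0) * kd 0 i + Real.cosh (p 0) * kd 3 i) := by
  refine ⟨fun a => ContDiff.contDiffOn (by fun_prop), ?_⟩
  intro p _ a b
  simp only [covD1, Fin.sum_univ_four, Gamma, pdH, pdX4]
  fin_cases a <;> fin_cases b <;> simp [kd] <;> ring

lemma kv5 : IsKillingVector (fun p => ((p 2) ^ 2 - (p 3) ^ 2) / 2) Set.univ
    (fun p i => -(p 3) * Real.cosh (p 0) * kd 0 i + Real.sinh (p 0) * kd 3 i) := by
  refine ⟨fun a => ContDiff.contDiffOn (by fun_prop), ?_⟩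
  intro p _ a b
  simp only [covD1, Fin.sum_univ_four, Gamma, pdH, pdX5]
  fin_cases a <;> fin_cases b <;> simp [kd] <;> ring

lemma kv7 : IsKillingVector (fun p => ((p 2) ^ 2 - (p 3) ^ 2) / 2) Set.univ
    (fun p i => -((p 2) ^ 2 - (p 3) ^ 2) * kd 0 i - kd 1 i) := by
  refine ⟨fun a => ContDiff.contDiffOn (by fun_prop), ?_⟩
  intro p _ a b
  simp only [covD1, Fin.sum_univ_four, Gamma, pdH, pdX7]
  fin_cases a <;> fin_cases b <;> simp [kd] <;> ring

lemma gdecomp : ∀ (p : Pt) (a b : Fin 4),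
    ppMetric (fun p => ((p 2) ^ 2 - (p 3) ^ 2) / 2) p a b =
      -2 * (((-kd 0 a) * (-((p 2) ^ 2 - (p 3) ^ 2) * kd 0 b - kd 1 b)
            + (-kd 0 b) * (-((p 2) ^ 2 - (p 3) ^ 2) * kd 0 a - kd 1 a)) / 2)
        + (-(p 2) * Real.cos (p 0) * kd 0 a + Real.sin (p 0) * kd 2 a)
            * (-(p 2) * Real.cos (p 0) * kd 0 b + Real.sin (p 0) * kd 2 b)
        + ((p 2) * Real.sin (p 0) * kd 0 a + Real.cos (p 0) * kd 2 a)
            * ((p 2) * Real.sin (p 0) * kd 0 b + Real.cos (p 0) * kd 2 b)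
        + (-(p 3) * Real.sinh (p 0) * kd 0 a + Real.cosh (p 0) * kd 3 a)
            * (-(p 3) * Real.sinh (p 0) * kd 0 b + Real.cosh (p 0) * kd 3 b)
        - (-(p 3) * Real.cosh (p 0) * kd 0 a + Real.sinh (p 0) * kd 3 a)
            * (-(p 3) * Real.cosh (p 0) * kd 0 b + Real.sinh (p 0) * kd 3 b) := by
  intro p a b
  have hs := Real.sin_sq_add_cos_sq (p 0)
  have hc := Real.cosh_sq_sub_sinh_sq (p 0)
  fin_cases a <;> fin_cases b <;> simp [ppMetric, kd] <;> nlinarith [hs, hc]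

end KV

/-- For the vacuum plane wave `2H = y² - z²` on `ℝ⁴`, the six listed
covector fields are Killing vectors and the metric is the stated combination of
their symmetrized products: `g_{ab} = -2 X₁_{(a} X₇_{b)} + X₂_a X₂_b + X₃_a X₃_b
+ X₄_a X₄_b - X₅_a X₅_b`. -/
theorem stmt12 :
    let H : Pt → ℝ := fun p => ((p 2) ^ 2 - (p 3) ^ 2) / 2
    let U : Set Pt := Set.univ
    let X₁ : Pt → Fin 4 → ℝ := fun _ i => -kd 0 i
    let X₂ : Pt → Fin 4 → ℝ := fun p i =>
      -(p 2) * Real.cos (p 0) * kd 0 i + Real.sin (p 0) * kd 2 i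
    let X₃ : Pt → Fin 4 → ℝ := fun p i =>
      (p 2) * Real.sin (p 0) * kd 0 i + Real.cos (p 0) * kd 2 i
    let X₄ : Pt → Fin 4 → ℝ := fun p i =>
      -(p 3) * Real.sinh (p 0) * kd 0 i + Real.cosh (p 0) * kd 3 i
    let X₅ : Pt → Fin 4 → ℝ := fun p i =>
      -(p 3) * Real.cosh (p 0) * kd 0 i + Real.sinh (p 0) * kd 3 i
    let X₇ : Pt → Fin 4 → ℝ := fun p i =>
      -((p 2) ^ 2 - (p 3) ^ 2) * kd 0 i - kd 1 i
    IsKillingVector H U X₁ ∧ IsKillingVector H U X₂ ∧ IsKillingVector H U X₃ ∧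
    IsKillingVector H U X₄ ∧ IsKillingVector H U X₅ ∧ IsKillingVector H U X₇ ∧
    ∀ p a b, ppMetric H p a b =
      -2 * ((X₁ p a * X₇ p b + X₁ p b * X₇ p a) / 2)
        + X₂ p a * X₂ p b + X₃ p a * X₃ p b + X₄ p a * X₄ p b - X₅ p a * X₅ p b := by
  exact ⟨kv1, kv2, kv3, kv4, kv5, kv7, gdecomp⟩

end
end

section
/- Let I ⊆ ℝ be an open interval and let A : I → ℝ be twice continuously differentiable with A(u) > 0 for all u ∈ I, satisfying the differential equation 12 A A'' − 15 (A')² − 64 A³ = 0 on I. Then there exist u₀ ∈ ℝ and λ > 0 such that either A(u) = (3/16)(u − u₀)⁻² for all u ∈ I, or A(u) = λ²(λ²(u − u₀)² − 4/3)⁻² for all u ∈ I. Conversely, each function of either of these two forms is positive and satisfies 12 A A'' − 15 (A')² − 64 A³ = 0 on any open interval on which it is defined. -/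
/-!
With `W = A^(-1/2)`, i.e. `A = W⁻²`, the equation becomes `2 W W'' = W'² - 16/3`. Along its
solutions `(W'² - 16/3) / W` has vanishing derivative, so it is a constant `4c`; then `W'' = 2c`
and `W = c u² + b u + d`, and evaluating the first integral at any point gives the discriminant
`b² - 4cd = 16/3`. Conversely `W⁻²` solves the equation for every such quadratic. The case
`c = 0` is the family `(3/16)(u - u₀)⁻²`; for `c ≠ 0`, completing the square with `λ = |c|`
gives `λ² (λ² (u - u₀)² - 4/3)⁻²`.
-/

open Filter Topology

theorem hasDerivAt_quadratic (c b d x : ℝ) :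
    HasDerivAt (fun v => c * v ^ 2 + b * v + d) (2 * c * x + b) x := by
  simpa [mul_comm, mul_left_comm] using
    (((hasDerivAt_pow 2 x).const_mul c).add ((hasDerivAt_id x).const_mul b)).add_const d

section SecondOrder

variable {s : Set ℝ} {W : ℝ → ℝ}

theorem ContDiffOn.hasDerivAt_of_isOpen (hW : ContDiffOn ℝ 2 W s) (hs : IsOpen s) {u : ℝ}
    (hu : u ∈ s) : HasDerivAt W (deriv W u) u :=
  ((hW.differentiableOn two_ne_zero).differentiableAt (hs.mem_nhds hu)).hasDerivAt

theorem ContDiffOn.hasDerivAt_deriv_of_isOpen (hW : ContDiffOn ℝ 2 W s) (hs : IsOpen s) {u : ℝ}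
    (hu : u ∈ s) : HasDerivAt (deriv W) (deriv (deriv W) u) u :=
  (((hW.deriv_of_isOpen hs (m := 1) le_rfl).differentiableOn one_ne_zero).differentiableAt
    (hs.mem_nhds hu)).hasDerivAt

theorem exists_quadratic_of_deriv_deriv_eq (hs : IsOpen s) (hs' : IsPreconnected s)
    (hW : ContDiffOn ℝ 2 W s) {c : ℝ} (h : ∀ u ∈ s, deriv (deriv W) u = 2 * c) :
    ∃ b d, ∀ u ∈ s, W u = c * u ^ 2 + b * u + d := by
  obtain ⟨b, hb⟩ := hs.exists_eq_add_of_deriv_eq hs' (g := fun u => 2 * c * u)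
    (fun u hu => (hW.hasDerivAt_deriv_of_isOpen hs hu).differentiableAt.differentiableWithinAt)
    (by fun_prop) fun u hu => by simp [h u hu]
  obtain ⟨d, hd⟩ := hs.exists_eq_add_of_deriv_eq hs' (g := fun u => c * u ^ 2 + b * u)
    (fun u hu => (hW.hasDerivAt_of_isOpen hs hu).differentiableAt.differentiableWithinAt)
    (by fun_prop) fun u hu => by
      simpa [hb hu] using ((hasDerivAt_quadratic c b 0 u).deriv).symm
  exact ⟨b, d, hd⟩

theorem exists_deriv_deriv_eq_const_of_ode (hs : IsOpen s) (hs' : IsPreconnected s)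
    (hW : ContDiffOn ℝ 2 W s) (hW0 : ∀ u ∈ s, W u ≠ 0) {κ : ℝ}
    (hode : ∀ u ∈ s, 2 * W u * deriv (deriv W) u = deriv W u ^ 2 - κ) :
    ∃ c, ∀ u ∈ s, deriv (deriv W) u = 2 * c := by
  have hF : ∀ u ∈ s, HasDerivAt (fun v => (deriv W v ^ 2 - κ) / (4 * W v)) 0 u := fun u hu => by
    refine ((((hW.hasDerivAt_deriv_of_isOpen hs hu).fun_pow 2).sub_const κ).fun_div
      ((hW.hasDerivAt_of_isOpen hs hu).const_mul 4)
      (mul_ne_zero four_ne_zero (hW0 u hu))).congr_deriv ?_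
    rw [← hode u hu]
    ring
  obtain ⟨c, hc⟩ := hs.exists_is_const_of_deriv_eq_zero hs'
    (fun u hu => (hF u hu).differentiableAt.differentiableWithinAt) fun u hu => (hF u hu).deriv
  refine ⟨c, fun u hu => ?_⟩
  have h := hc u hu
  rw [← hode u hu, div_eq_iff (mul_ne_zero four_ne_zero (hW0 u hu))] at h
  exact mul_left_cancel₀ (mul_ne_zero two_ne_zero (hW0 u hu)) (by linear_combination h)

theorem exists_quadratic_of_ode (hs : IsOpen s) (hs' : IsPreconnected s)
    (hW : ContDiffOn ℝ 2 W s) (hW0 : ∀ u ∈ s, W u ≠ 0) {κ : ℝ}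
    (hode : ∀ u ∈ s, 2 * W u * deriv (deriv W) u = deriv W u ^ 2 - κ) :
    ∃ c b d, b ^ 2 - 4 * c * d = κ ∧ ∀ u ∈ s, W u = c * u ^ 2 + b * u + d := by
  rcases s.eq_empty_or_nonempty with rfl | ⟨x, hx⟩
  · exact ⟨1, 0, -κ / 4, by ring, by simp⟩
  obtain ⟨c, hc⟩ := exists_deriv_deriv_eq_const_of_ode hs hs' hW hW0 hode
  obtain ⟨b, d, hbd⟩ := exists_quadratic_of_deriv_deriv_eq hs hs' hW hc
  have hderiv : deriv W x = 2 * c * x + b := by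
    rw [EventuallyEq.deriv_eq (eventually_of_mem (hs.mem_nhds hx) hbd),
      (hasDerivAt_quadratic c b d x).deriv]
  refine ⟨c, b, d, ?_, hbd⟩
  have := hode x hx
  rw [hbd x hx, hc x hx, hderiv] at this
  linear_combination -this

end SecondOrder

noncomputable def killingResidual (A : ℝ → ℝ) (u : ℝ) : ℝ :=
  12 * A u * deriv (deriv A) u - 15 * deriv A u ^ 2 - 64 * A u ^ 3

theorem killingResidual_congr {A B : ℝ → ℝ} {u : ℝ} (h : A =ᶠ[𝓝 u] B) :
    killingResidual A u = killingResidual B u := by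
  simp only [killingResidual, h.eq_of_nhds, h.deriv_eq, h.deriv.deriv_eq]

theorem HasDerivAt.inv_sq {W : ℝ → ℝ} {w u : ℝ} (h : HasDerivAt W w u) (hu : W u ≠ 0) :
    HasDerivAt (fun v => (W v ^ 2)⁻¹) (-2 * w / W u ^ 3) u := by
  refine ((h.fun_pow 2).fun_inv (pow_ne_zero 2 hu)).congr_deriv ?_
  field_simp
  ring

theorem killingResidual_inv_sq {W W' : ℝ → ℝ} {u w'' : ℝ}
    (hW : ∀ᶠ v in 𝓝 u, HasDerivAt W (W' v) v) (hW' : HasDerivAt W' w'' u) (hu : W u ≠ 0) :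
    killingResidual (fun v => (W v ^ 2)⁻¹) u
      = -12 / W u ^ 6 * (2 * W u * w'' - W' u ^ 2 + 16 / 3) := by
  have hne : ∀ᶠ v in 𝓝 u, W v ≠ 0 := hW.self_of_nhds.continuousAt.eventually_ne hu
  have hderiv : deriv (fun v => (W v ^ 2)⁻¹) =ᶠ[𝓝 u] fun v => -2 * W' v / W v ^ 3 := by
    filter_upwards [hW, hne] with v hv hv0 using (hv.inv_sq hv0).deriv
  rw [killingResidual, hderiv.deriv_eq, hderiv.eq_of_nhds,
    ((hW'.const_mul (-2)).fun_div (hW.self_of_nhds.fun_pow 3) (pow_ne_zero 3 hu)).deriv]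
  field_simp
  ring

theorem killingResidual_inv_sq_eq_zero_iff {s : Set ℝ} {W : ℝ → ℝ} (hs : IsOpen s)
    (hW : ContDiffOn ℝ 2 W s) {u : ℝ} (hu : u ∈ s) (hu0 : W u ≠ 0) :
    killingResidual (fun v => (W v ^ 2)⁻¹) u = 0 ↔
      2 * W u * deriv (deriv W) u = deriv W u ^ 2 - 16 / 3 := by
  rw [killingResidual_inv_sq (eventually_of_mem (hs.mem_nhds hu) fun v hv =>
      hW.hasDerivAt_of_isOpen hs hv) (hW.hasDerivAt_deriv_of_isOpen hs hu) hu0,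
    mul_eq_zero, or_iff_right (by simp [hu0])]
  constructor <;> intro h <;> linear_combination h

theorem killingResidual_inv_sq_quadratic {c b d u : ℝ} (hdisc : b ^ 2 - 4 * c * d = 16 / 3)
    (hu : c * u ^ 2 + b * u + d ≠ 0) :
    killingResidual (fun v => ((c * v ^ 2 + b * v + d) ^ 2)⁻¹) u = 0 := by
  rw [killingResidual_inv_sq (Eventually.of_forall (hasDerivAt_quadratic c b d))
    (((hasDerivAt_id u).const_mul (2 * c)).add_const b) hu]
  simp only [mul_one]
  linear_combination (12 / (c * u ^ 2 + b * u + d) ^ 6) * hdisc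

theorem killingResidual_family₁ {u₀ u : ℝ} (hu : u ≠ u₀) :
    killingResidual (fun s => 3 / 16 / (s - u₀) ^ 2) u = 0 := by
  set b : ℝ := 4 / √3
  have hb : b ^ 2 = 16 / 3 := by
    rw [div_pow, Real.sq_sqrt (by norm_num)]; norm_num
  have hfun : (fun s => 3 / 16 / (s - u₀) ^ 2)
      = fun s => ((0 * s ^ 2 + b * s + -(b * u₀)) ^ 2)⁻¹ := by
    funext s
    rw [show 0 * s ^ 2 + b * s + -(b * u₀) = b * (s - u₀) by ring, mul_pow, hb]
    field_simp
  rw [hfun]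
  refine killingResidual_inv_sq_quadratic (by linear_combination hb) ?_
  rw [show 0 * u ^ 2 + b * u + -(b * u₀) = b * (u - u₀) by ring]
  exact mul_ne_zero (by positivity) (sub_ne_zero.2 hu)

theorem killingResidual_family₂ {u₀ lam u : ℝ} (hlam : 0 < lam)
    (hu : lam ^ 2 * (u - u₀) ^ 2 - 4 / 3 ≠ 0) :
    killingResidual (fun s => lam ^ 2 / (lam ^ 2 * (s - u₀) ^ 2 - 4 / 3) ^ 2) u = 0 := by
  have hW : ∀ s, lam * s ^ 2 + -2 * lam * u₀ * s + (lam * u₀ ^ 2 - 4 / (3 * lam))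
      = (lam ^ 2 * (s - u₀) ^ 2 - 4 / 3) / lam := fun s => by
    field_simp
    ring
  have hfun : (fun s => lam ^ 2 / (lam ^ 2 * (s - u₀) ^ 2 - 4 / 3) ^ 2)
      = fun s => ((lam * s ^ 2 + -2 * lam * u₀ * s + (lam * u₀ ^ 2 - 4 / (3 * lam))) ^ 2)⁻¹ := by
    funext s
    rw [hW, div_pow, inv_div]
  rw [hfun]
  refine killingResidual_inv_sq_quadratic (by field_simp; ring) ?_
  rw [hW]
  exact div_ne_zero hu hlam.ne'

theorem inv_sq_quadratic_mem_families {c b d : ℝ} (h : b ^ 2 - 4 * c * d = 16 / 3) :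
    ∃ u₀ lam : ℝ, 0 < lam ∧
      ((∀ u, ((c * u ^ 2 + b * u + d) ^ 2)⁻¹ = 3 / 16 / (u - u₀) ^ 2) ∨
        ∀ u, ((c * u ^ 2 + b * u + d) ^ 2)⁻¹ = lam ^ 2 / (lam ^ 2 * (u - u₀) ^ 2 - 4 / 3) ^ 2) := by
  rcases eq_or_ne c 0 with rfl | hc
  · have hb : b ^ 2 = 16 / 3 := by linear_combination h
    have hb0 : b ≠ 0 := by rintro rfl; norm_num at hb
    refine ⟨-d / b, 1, one_pos, Or.inl fun u => ?_⟩
    rw [show 0 * u ^ 2 + b * u + d = b * (u - -d / b) by field_simp; ring, mul_pow, hb, mul_inv,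
      inv_div]
    exact (div_eq_mul_inv _ _).symm
  · refine ⟨-b / (2 * c), |c|, abs_pos.2 hc, Or.inr fun u => ?_⟩
    rw [sq_abs, show c ^ 2 * (u - -b / (2 * c)) ^ 2 - 4 / 3 = c * (c * u ^ 2 + b * u + d) by
      field_simp; linear_combination 3 * h, mul_pow, div_mul_cancel_left₀ (pow_ne_zero 2 hc)]

/-- classification of positive solutions of
`12 A A'' - 15 (A')² - 64 A³ = 0` on an open interval: they are exactly the functions
`A(u) = (3/16)(u-u₀)⁻²` and `A(u) = λ²(λ²(u-u₀)² - 4/3)⁻²` (with `λ > 0`), and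
conversely each such function is positive and solves the equation wherever defined. -/
theorem stmt13 (I : Set ℝ) (hIopen : IsOpen I) (hIconn : I.OrdConnected)
    (A : ℝ → ℝ) (hA : ContDiffOn ℝ 2 A I) (hpos : ∀ u ∈ I, 0 < A u)
    (hode : ∀ u ∈ I,
      12 * A u * deriv (deriv A) u - 15 * (deriv A u) ^ 2 - 64 * (A u) ^ 3 = 0) :
    (∃ (u₀ lam : ℝ), 0 < lam ∧
      ((∀ u ∈ I, A u = 3 / 16 / (u - u₀) ^ 2) ∨
       (∀ u ∈ I, A u = lam ^ 2 / (lam ^ 2 * (u - u₀) ^ 2 - 4 / 3) ^ 2))) ∧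
    (∀ (u₀ lam : ℝ), 0 < lam →
      (∀ u : ℝ, u ≠ u₀ →
        (0 < (fun s => 3 / 16 / (s - u₀) ^ 2) u ∧
          12 * (fun s => 3 / 16 / (s - u₀) ^ 2) u
              * deriv (deriv (fun s => 3 / 16 / (s - u₀) ^ 2)) u
            - 15 * (deriv (fun s => 3 / 16 / (s - u₀) ^ 2) u) ^ 2
            - 64 * ((fun s => 3 / 16 / (s - u₀) ^ 2) u) ^ 3 = 0)) ∧
      (∀ u : ℝ, lam ^ 2 * (u - u₀) ^ 2 - 4 / 3 ≠ 0 →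
        (0 < (fun s => lam ^ 2 / (lam ^ 2 * (s - u₀) ^ 2 - 4 / 3) ^ 2) u ∧
          12 * (fun s => lam ^ 2 / (lam ^ 2 * (s - u₀) ^ 2 - 4 / 3) ^ 2) u
              * deriv (deriv (fun s => lam ^ 2 / (lam ^ 2 * (s - u₀) ^ 2 - 4 / 3) ^ 2)) u
            - 15 * (deriv (fun s => lam ^ 2 / (lam ^ 2 * (s - u₀) ^ 2 - 4 / 3) ^ 2) u) ^ 2
            - 64 * ((fun s => lam ^ 2 / (lam ^ 2 * (s - u₀) ^ 2 - 4 / 3) ^ 2) u) ^ 3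
            = 0))) := by
  refine ⟨?_, fun u₀ lam hlam =>
    ⟨fun u hu => ⟨div_pos (by norm_num) (sq_pos_of_ne_zero (sub_ne_zero.2 hu)),
      killingResidual_family₁ hu⟩,
    fun u hu => ⟨by positivity, killingResidual_family₂ hlam hu⟩⟩⟩
  have hsqrt : ∀ u ∈ I, 0 < √(A u) := fun u hu => Real.sqrt_pos.2 (hpos u hu)
  set W : ℝ → ℝ := fun v => (√(A v))⁻¹
  have hW : ContDiffOn ℝ 2 W I :=
    (hA.sqrt fun u hu => (hpos u hu).ne').inv fun u hu => (hsqrt u hu).ne'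
  have hW0 : ∀ u ∈ I, W u ≠ 0 := fun u hu => inv_ne_zero (hsqrt u hu).ne'
  have hAW : ∀ u ∈ I, A u = (W u ^ 2)⁻¹ := fun u hu => by
    simp only [W, inv_pow, Real.sq_sqrt (hpos u hu).le, inv_inv]
  have hWode : ∀ u ∈ I, 2 * W u * deriv (deriv W) u = deriv W u ^ 2 - 16 / 3 := fun u hu => by
    rw [← killingResidual_inv_sq_eq_zero_iff hIopen hW hu (hW0 u hu),
      ← killingResidual_congr (eventually_of_mem (hIopen.mem_nhds hu) hAW)]
    exact hode u hu
  obtain ⟨c, b, d, hdisc, hWq⟩ := exists_quadratic_of_ode hIopen hIconn.isPreconnected hW hW0 hWode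
  obtain ⟨u₀, lam, hlam, hfam⟩ := inv_sq_quadratic_mem_families hdisc
  refine ⟨u₀, lam, hlam, hfam.imp (fun h u hu => ?_) (fun h u hu => ?_)⟩ <;>
    rw [hAW u hu, hWq u hu, h]
end

section
/- Let κ ∈ ℝ with κ ≠ 0 and define A(u) = κ u⁻² on the interval (0, ∞). Then A satisfies the differential equation 5 (A'')² − 4 A' A''' + 16 A (A')² = 0 on (0, ∞) if and only if κ = 3/16. -/
noncomputable section

/-- Valid also at `x = 0`: for `m < 0` both sides are the junk value `0`. -/
theorem deriv_const_mul_zpow {𝕜 : Type*} [NontriviallyNormedField 𝕜] (c : 𝕜) (m : ℤ) :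
    deriv (fun x : 𝕜 => c * x ^ m) = fun x => c * m * x ^ (m - 1) := by
  simp only [deriv_const_mul_field', deriv_zpow', mul_assoc]

theorem div_sq_eq_mul_zpow {𝕜 : Type*} [DivisionRing 𝕜] (c : 𝕜) :
    (fun x : 𝕜 => c / x ^ 2) = fun x => c * x ^ (-2 : ℤ) := by
  funext x
  rw [zpow_neg, zpow_ofNat, div_eq_mul_inv]

theorem killingCondition_const_div_sq (κ u : ℝ) :
    5 * (deriv (deriv (fun s => κ / s ^ 2)) u) ^ 2
        - 4 * deriv (fun s => κ / s ^ 2) u * deriv (deriv (deriv (fun s => κ / s ^ 2))) u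
        + 16 * (κ / u ^ 2) * (deriv (fun s => κ / s ^ 2) u) ^ 2
      = 4 * κ ^ 2 * (16 * κ - 3) / u ^ 8 := by
  simp only [div_sq_eq_mul_zpow, deriv_const_mul_zpow]
  norm_num [zpow_neg]
  ring

/-- `A(u) = κ u⁻²` (`κ ≠ 0`) satisfies
`5 (A'')² - 4 A' A''' + 16 A (A')² = 0` on `(0,∞)` if and only if `κ = 3/16`. -/
theorem stmt14 (κ : ℝ) (hκ : κ ≠ 0) :
    (∀ u ∈ Set.Ioi (0 : ℝ),
        5 * (deriv (deriv (fun s => κ / s ^ 2)) u) ^ 2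
          - 4 * deriv (fun s => κ / s ^ 2) u
              * deriv (deriv (deriv (fun s => κ / s ^ 2))) u
          + 16 * (κ / u ^ 2) * (deriv (fun s => κ / s ^ 2) u) ^ 2 = 0) ↔
      κ = 3 / 16 := by
  simp only [killingCondition_const_div_sq]
  constructor
  · intro h
    have h1 : 4 * κ ^ 2 * (16 * κ - 3) = 0 := by simpa using h 1 (Set.mem_Ioi.2 one_pos)
    have : 16 * κ - 3 = 0 := by simpa [hκ] using h1
    linarith
  · rintro rfl u -
    norm_num

end
end

section
/- Let I ⊆ ℝ be an open interval and let w : I → ℝ be three times continuously differentiable, satisfying w(u) e^{w(u)} = −e^{−u} and −1 < w(u) < −1/4 for all u ∈ I (i.e. w is a branch of the Lambert W-function evaluated at −e^{−u}). Define A = −(1/4 + w)(1 + w)⁻⁴ on I. Then: (i) A(u) > 0 for all u ∈ I; (ii) A satisfies 5 (A'')² − 4 A' A''' + 16 A (A')² = 0 on I; and (iii) the functions f₁ = (−(1 + w)/w)^{1/2} and f₂ = (−(1 + w) w)^{1/2} are well defined on I and satisfy f'' + A f = 0 on I. -/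
/-!
Differentiating `w e^w = -e^{-u}` gives the autonomous equation `w' = -w / (1 + w)`, so the
derivative of any rational expression `g (w)` is again a rational expression in `w`. Hence `A`,
its first three derivatives, `f₁²`, `f₂²` and their first two derivatives are explicit rational
functions of `w`, and each claimed identity becomes an identity of rational functions in `w`.
For `f = √h` one has `f'' + A f = (2 h h'' - h'² + 4 A h²) / (4 h √h)`, which reduces the two
linear equations to the vanishing of that numerator.
-/

open Real Set Filter Topology

theorem hasDerivAt_of_mul_exp_eq_neg_exp_neg {w : ℝ → ℝ} {u : ℝ} (hdiff : DifferentiableAt ℝ w u)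
    (hW : ∀ᶠ v in 𝓝 u, w v * exp (w v) = -exp (-v)) (hne : 1 + w u ≠ 0) :
    HasDerivAt w (-w u / (1 + w u)) u := by
  have hd := hdiff.hasDerivAt
  have hlhs : HasDerivAt (fun v => w v * exp (w v))
      (deriv w u * exp (w u) + w u * (exp (w u) * deriv w u)) u :=
    hd.mul hd.exp
  have hrhs : HasDerivAt (fun v => -exp (-v)) (exp (-u)) u := by
    simpa using ((hasDerivAt_neg u).exp).fun_neg
  have heq := hlhs.unique (hrhs.congr_of_eventuallyEq hW)
  have hWu : w u * exp (w u) = -exp (-u) := hW.self_of_nhds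
  have hslope : deriv w u * (1 + w u) = -w u := by
    have hexp : (deriv w u * (1 + w u) + w u) * exp (w u) = 0 := by
      linear_combination heq + hWu
    linarith [(mul_eq_zero.1 hexp).resolve_right (exp_pos _).ne']
  exact hd.congr_deriv (by rw [eq_div_iff hne]; linarith)

theorem eqOn_deriv_of_hasDerivAt {I : Set ℝ} {f f' : ℝ → ℝ}
    (hf : ∀ u ∈ I, HasDerivAt f (f' u) u) : EqOn (deriv f) f' I :=
  fun u hu => (hf u hu).deriv

section SqrtODE

variable {h p q : ℝ → ℝ} {u : ℝ}

theorem hasDerivAt_deriv_sqrt (hpos : 0 < h u) (hp : HasDerivAt h (p u) u)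
    (hq : HasDerivAt p (q u) u) :
    HasDerivAt (fun v => p v / (2 * √(h v)))
      ((2 * q u * h u - p u ^ 2) / (4 * h u * √(h u))) u := by
  have hs : 0 < √(h u) := sqrt_pos.2 hpos
  have hsq : √(h u) ^ 2 = h u := sq_sqrt hpos.le
  refine (hq.div ((hp.sqrt hpos.ne').const_mul 2) (by positivity)).congr_deriv ?_
  set s := √(h u)
  rw [← hsq]
  field_simp
  ring

theorem deriv_deriv_sqrt_add_mul_eq_zero {I : Set ℝ} (hI : IsOpen I) {A : ℝ → ℝ}
    (hpos : ∀ u ∈ I, 0 < h u) (hp : ∀ u ∈ I, HasDerivAt h (p u) u)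
    (hq : ∀ u ∈ I, HasDerivAt p (q u) u)
    (hkey : ∀ u ∈ I, 2 * q u * h u - p u ^ 2 + 4 * A u * h u ^ 2 = 0) :
    ∀ u ∈ I, deriv (deriv fun v => √(h v)) u + A u * √(h u) = 0 := by
  intro u hu
  have hd1 : EqOn (deriv fun v => √(h v)) (fun v => p v / (2 * √(h v))) I :=
    eqOn_deriv_of_hasDerivAt fun v hv => (hp v hv).sqrt (hpos v hv).ne'
  rw [hd1.deriv hI hu, (hasDerivAt_deriv_sqrt (hpos u hu) (hp u hu) (hq u hu)).deriv,
    show 2 * q u * h u - p u ^ 2 = -(4 * A u * h u ^ 2) by linarith [hkey u hu]]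
  have hs : 0 < √(h u) := sqrt_pos.2 (hpos u hu)
  have hsq : √(h u) ^ 2 = h u := sq_sqrt (hpos u hu).le
  set s := √(h u)
  rw [← hsq]
  field_simp
  ring

end SqrtODE

namespace LambertFlow

variable {w : ℝ → ℝ} {u : ℝ}

theorem hasDerivAt_A (hw : HasDerivAt w (-w u / (1 + w u)) u) (hne : 1 + w u ≠ 0) :
    HasDerivAt (fun v => -(1 / 4 + w v) / (1 + w v) ^ 4) (-3 * w u ^ 2 / (1 + w u) ^ 6) u := by
  refine ((hw.const_add _).fun_neg.fun_div ((hw.const_add 1).fun_pow 4)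
    (pow_ne_zero 4 hne)).congr_deriv ?_
  field_simp
  ring

theorem hasDerivAt_derivA (hw : HasDerivAt w (-w u / (1 + w u)) u) (hne : 1 + w u ≠ 0) :
    HasDerivAt (fun v => -3 * w v ^ 2 / (1 + w v) ^ 6)
      ((6 * w u ^ 2 - 12 * w u ^ 3) / (1 + w u) ^ 8) u := by
  refine (((hw.fun_pow 2).const_mul (-3)).fun_div ((hw.const_add 1).fun_pow 6)
    (pow_ne_zero 6 hne)).congr_deriv ?_
  field_simp
  ring

theorem hasDerivAt_deriv2A (hw : HasDerivAt w (-w u / (1 + w u)) u) (hne : 1 + w u ≠ 0) :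
    HasDerivAt (fun v => (6 * w v ^ 2 - 12 * w v ^ 3) / (1 + w v) ^ 8)
      ((-12 * w u ^ 2 + 72 * w u ^ 3 - 60 * w u ^ 4) / (1 + w u) ^ 10) u := by
  refine ((((hw.fun_pow 2).const_mul 6).fun_sub ((hw.fun_pow 3).const_mul 12)).fun_div
    ((hw.const_add 1).fun_pow 8) (pow_ne_zero 8 hne)).congr_deriv ?_
  field_simp
  ring

theorem hasDerivAt_sq_f₁ (hw : HasDerivAt w (-w u / (1 + w u)) u) (hne : 1 + w u ≠ 0)
    (hw0 : w u ≠ 0) :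
    HasDerivAt (fun v => -(1 + w v) / w v) (-1 / (w u * (1 + w u))) u := by
  refine ((hw.const_add 1).fun_neg.fun_div hw hw0).congr_deriv ?_
  field_simp
  ring

theorem hasDerivAt_deriv_sq_f₁ (hw : HasDerivAt w (-w u / (1 + w u)) u) (hne : 1 + w u ≠ 0)
    (hw0 : w u ≠ 0) :
    HasDerivAt (fun v => -1 / (w v * (1 + w v))) (-(2 * w u + 1) / (w u * (1 + w u) ^ 3)) u := by
  refine ((hasDerivAt_const u (-1 : ℝ)).fun_div (hw.fun_mul (hw.const_add 1))
    (mul_ne_zero hw0 hne)).congr_deriv ?_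
  field_simp
  ring

theorem hasDerivAt_sq_f₂ (hw : HasDerivAt w (-w u / (1 + w u)) u) (hne : 1 + w u ≠ 0) :
    HasDerivAt (fun v => -(1 + w v) * w v) (w u * (1 + 2 * w u) / (1 + w u)) u := by
  refine ((hw.const_add 1).fun_neg.fun_mul hw).congr_deriv ?_
  field_simp
  ring

theorem hasDerivAt_deriv_sq_f₂ (hw : HasDerivAt w (-w u / (1 + w u)) u) (hne : 1 + w u ≠ 0) :
    HasDerivAt (fun v => w v * (1 + 2 * w v) / (1 + w v))
      (-w u * (1 + 4 * w u + 2 * w u ^ 2) / (1 + w u) ^ 3) u := by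
  refine ((hw.fun_mul ((hw.const_mul 2).const_add 1)).fun_div (hw.const_add 1) hne).congr_deriv ?_
  field_simp
  ring

variable {I : Set ℝ} {w : ℝ → ℝ}

theorem potential_equation (hI : IsOpen I)
    (hflow : ∀ u ∈ I, HasDerivAt w (-w u / (1 + w u)) u) (hne : ∀ u ∈ I, 1 + w u ≠ 0) :
    let A : ℝ → ℝ := fun u => -(1 / 4 + w u) / (1 + w u) ^ 4
    ∀ u ∈ I, 5 * (deriv (deriv A) u) ^ 2 - 4 * deriv A u * deriv (deriv (deriv A)) u
      + 16 * A u * (deriv A u) ^ 2 = 0 := by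
  intro A u hu
  have hA' : EqOn (deriv A) _ I :=
    eqOn_deriv_of_hasDerivAt fun u hu => hasDerivAt_A (hflow u hu) (hne u hu)
  have hA'' : EqOn (deriv (deriv A)) _ I := (hA'.deriv hI).trans <|
    eqOn_deriv_of_hasDerivAt fun u hu => hasDerivAt_derivA (hflow u hu) (hne u hu)
  have hA''' : EqOn (deriv (deriv (deriv A))) _ I := (hA''.deriv hI).trans <|
    eqOn_deriv_of_hasDerivAt fun u hu => hasDerivAt_deriv2A (hflow u hu) (hne u hu)
  rw [hA' hu, hA'' hu, hA''' hu]
  have := hne u hu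
  simp only [A]
  field_simp
  ring

theorem sqrt_f₁_equation (hI : IsOpen I) (hflow : ∀ u ∈ I, HasDerivAt w (-w u / (1 + w u)) u)
    (hrange : ∀ u ∈ I, -1 < w u ∧ w u < 0) :
    ∀ u ∈ I, deriv (deriv fun v => √(-(1 + w v) / w v)) u
      + -(1 / 4 + w u) / (1 + w u) ^ 4 * √(-(1 + w u) / w u) = 0 := by
  have hne : ∀ u ∈ I, 1 + w u ≠ 0 := fun u hu => by linarith [(hrange u hu).1]
  have hw0 : ∀ u ∈ I, w u ≠ 0 := fun u hu => (hrange u hu).2.ne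
  refine deriv_deriv_sqrt_add_mul_eq_zero hI
    (fun u hu => div_pos_of_neg_of_neg (by linarith [hrange u hu]) (hrange u hu).2)
    (fun u hu => hasDerivAt_sq_f₁ (hflow u hu) (hne u hu) (hw0 u hu))
    (fun u hu => hasDerivAt_deriv_sq_f₁ (hflow u hu) (hne u hu) (hw0 u hu)) fun u hu => ?_
  have := hne u hu
  have := hw0 u hu
  field_simp
  ring

theorem sqrt_f₂_equation (hI : IsOpen I) (hflow : ∀ u ∈ I, HasDerivAt w (-w u / (1 + w u)) u)
    (hrange : ∀ u ∈ I, -1 < w u ∧ w u < 0) :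
    ∀ u ∈ I, deriv (deriv fun v => √(-(1 + w v) * w v)) u
      + -(1 / 4 + w u) / (1 + w u) ^ 4 * √(-(1 + w u) * w u) = 0 := by
  have hne : ∀ u ∈ I, 1 + w u ≠ 0 := fun u hu => by linarith [(hrange u hu).1]
  refine deriv_deriv_sqrt_add_mul_eq_zero hI
    (fun u hu => mul_pos_of_neg_of_neg (by linarith [hrange u hu]) (hrange u hu).2)
    (fun u hu => hasDerivAt_sq_f₂ (hflow u hu) (hne u hu))
    (fun u hu => hasDerivAt_deriv_sq_f₂ (hflow u hu) (hne u hu)) fun u hu => ?_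
  have := hne u hu
  field_simp
  ring

end LambertFlow

theorem stmt15_general (I : Set ℝ) (hIopen : IsOpen I)
    (w : ℝ → ℝ) (hw : ContDiffOn ℝ 3 w I)
    (hW : ∀ u ∈ I, w u * Real.exp (w u) = -Real.exp (-u))
    (hrange : ∀ u ∈ I, -1 < w u ∧ w u < -(1 / 4)) :
    let A : ℝ → ℝ := fun u => -(1 / 4 + w u) / (1 + w u) ^ 4
    let f₁ : ℝ → ℝ := fun u => Real.sqrt (-(1 + w u) / w u)
    let f₂ : ℝ → ℝ := fun u => Real.sqrt (-(1 + w u) * w u)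
    (∀ u ∈ I, 0 < A u) ∧
    (∀ u ∈ I,
      5 * (deriv (deriv A) u) ^ 2 - 4 * deriv A u * deriv (deriv (deriv A)) u
        + 16 * A u * (deriv A u) ^ 2 = 0) ∧
    (∀ u ∈ I, 0 < -(1 + w u) / w u ∧ 0 < -(1 + w u) * w u) ∧
    (∀ u ∈ I, deriv (deriv f₁) u + A u * f₁ u = 0) ∧
    (∀ u ∈ I, deriv (deriv f₂) u + A u * f₂ u = 0) := by
  intro A f₁ f₂
  have hrange' : ∀ u ∈ I, -1 < w u ∧ w u < 0 := fun u hu =>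
    ⟨(hrange u hu).1, by linarith [(hrange u hu).2]⟩
  have hne : ∀ u ∈ I, 1 + w u ≠ 0 := fun u hu => by linarith [(hrange u hu).1]
  have hflow : ∀ u ∈ I, HasDerivAt w (-w u / (1 + w u)) u := fun u hu =>
    hasDerivAt_of_mul_exp_eq_neg_exp_neg
      ((hw.contDiffAt (hIopen.mem_nhds hu)).differentiableAt (by norm_num))
      (eventually_of_mem (hIopen.mem_nhds hu) hW) (hne u hu)
  refine ⟨fun u hu => div_pos (by linarith [(hrange u hu).2])
      (pow_pos (by linarith [(hrange u hu).1]) 4),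
    LambertFlow.potential_equation hIopen hflow hne, fun u hu => ⟨?_, ?_⟩,
    LambertFlow.sqrt_f₁_equation hIopen hflow hrange',
    LambertFlow.sqrt_f₂_equation hIopen hflow hrange'⟩
  · exact div_pos_of_neg_of_neg (by linarith [hrange u hu]) (hrange' u hu).2
  · exact mul_pos_of_neg_of_neg (by linarith [hrange u hu]) (hrange' u hu).2

/-- Lambert-W solution of `5 (A'')² - 4 A' A''' + 16 A (A')² = 0`.
If `w` is a branch of the Lambert W-function at `-e^{-u}` with `-1 < w < -1/4` on an
open interval `I`, then `A = -(1/4 + w)(1 + w)⁻⁴` is positive, satisfies the equation,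
and `f₁ = (-(1+w)/w)^{1/2}`, `f₂ = (-(1+w)w)^{1/2}` are well defined and satisfy
`f'' + A f = 0` on `I`. -/
theorem stmt15 (I : Set ℝ) (hIopen : IsOpen I) (hIconn : I.OrdConnected)
    (w : ℝ → ℝ) (hw : ContDiffOn ℝ 3 w I)
    (hW : ∀ u ∈ I, w u * Real.exp (w u) = -Real.exp (-u))
    (hrange : ∀ u ∈ I, -1 < w u ∧ w u < -(1 / 4)) :
    let A : ℝ → ℝ := fun u => -(1 / 4 + w u) / (1 + w u) ^ 4
    let f₁ : ℝ → ℝ := fun u => Real.sqrt (-(1 + w u) / w u)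
    let f₂ : ℝ → ℝ := fun u => Real.sqrt (-(1 + w u) * w u)
    (∀ u ∈ I, 0 < A u) ∧
    (∀ u ∈ I,
      5 * (deriv (deriv A) u) ^ 2 - 4 * deriv A u * deriv (deriv (deriv A)) u
        + 16 * A u * (deriv A u) ^ 2 = 0) ∧
    (∀ u ∈ I, 0 < -(1 + w u) / w u ∧ 0 < -(1 + w u) * w u) ∧
    (∀ u ∈ I, deriv (deriv f₁) u + A u * f₁ u = 0) ∧
    (∀ u ∈ I, deriv (deriv f₂) u + A u * f₂ u = 0) :=
  stmt15_general I hIopen w hw hW hrange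
end
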